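/- There exists a pair (P, L) of a set P of 19 points and a set L of 18 lines in the real projective plane such that exactly 4 points of P have degree 3, exactly 15 points of P have degree 4, every point of P has degree 3 or 4, and every line of L has degree exactly 4; that is, there exists a geometric 3|4-configuration with signature (4x³ + 15x⁴, 18y⁴). -/
import Mathlib


/- Model of the real projective plane: a point is a 1-dimensional linear subspace
of ℝ³ and a line is a 2-dimensional linear subspace of ℝ³; a point p is incident
to a line ℓ when p ≤ ℓ. -/

open scoped Classical

/-- The degree of a point `p` with respect to a finite set `L` of lines:
the number of lines of `L` incident to `p`. -/
noncomputable def pointDeg (L : Finset (Submodule ℝ (Fin 3 → ℝ)))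
    (p : Submodule ℝ (Fin 3 → ℝ)) : ℕ :=
  (L.filter fun l => p ≤ l).card

/-- The degree of a line `l` with respect to a finite set `P` of points:
the number of points of `P` incident to `l`. -/
noncomputable def lineDeg (P : Finset (Submodule ℝ (Fin 3 → ℝ)))
    (l : Submodule ℝ (Fin 3 → ℝ)) : ℕ :=
  (P.filter fun p => p ≤ l).card

/-- The number of incidences of `(P, L)`: the number of pairs `(p, ℓ) ∈ P × L`
with `p` incident to `ℓ`. -/
noncomputable def incCount (P L : Finset (Submodule ℝ (Fin 3 → ℝ))) : ℕ :=
  ((P ×ˢ L).filter fun pl => pl.1 ≤ pl.2).card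

/-- A point of the real projective plane: a 1-dimensional linear subspace of ℝ³. -/
def IsProjPoint (p : Submodule ℝ (Fin 3 → ℝ)) : Prop := Module.finrank ℝ p = 1

/-- A line of the real projective plane: a 2-dimensional linear subspace of ℝ³. -/
def IsProjLine (l : Submodule ℝ (Fin 3 → ℝ)) : Prop := Module.finrank ℝ l = 2

/-! ### Auxiliary constructions for the explicit configuration -/

/-- Integer coordinates of the 19 points. -/
def vdat : Fin 19 → Fin 3 → ℤ :=
  ![![4,4,1], ![4,3,1], ![1,1,0], ![4,0,1], ![1,-2,0], ![1,-1,0], ![2,5,1],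
    ![2,1,1], ![1,0,0], ![0,5,1], ![2,2,1], ![2,4,1], ![1,3,1], ![3,2,1],
    ![3,3,1], ![6,2,1], ![5,1,1], ![4,1,1], ![3,5,1]]

/-- Integer coefficients of the 18 lines. -/
def wdat : Fin 18 → Fin 3 → ℤ :=
  ![![1,1,-6], ![1,-1,-1], ![2,1,-11], ![1,-1,2], ![1,1,-5], ![2,1,-9],
    ![0,1,-2], ![0,1,-3], ![0,1,-5], ![2,1,-8], ![0,1,-1], ![1,-1,-4],
    ![1,0,-4], ![1,0,-2], ![2,1,-5], ![1,-1,0], ![1,1,-4], ![1,1,-8]]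

/-- Integer dot product. -/
def dotZ (b a : Fin 3 → ℤ) : ℤ := b 0 * a 0 + b 1 * a 1 + b 2 * a 2

/-- Real vector obtained from an integer vector. -/
noncomputable def rvec (a : Fin 3 → ℤ) : Fin 3 → ℝ := fun k => (a k : ℝ)

/-- The linear functional with integer coefficients `b`. -/
noncomputable def phi (b : Fin 3 → ℤ) : (Fin 3 → ℝ) →ₗ[ℝ] ℝ where
  toFun x := (b 0 : ℝ) * x 0 + (b 1 : ℝ) * x 1 + (b 2 : ℝ) * x 2
  map_add' x y := by simp only [Pi.add_apply]; ring
  map_smul' c x := by simp only [Pi.smul_apply, smul_eq_mul, RingHom.id_apply]; ring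

/-- The projective point with integer coordinates `a`. -/
noncomputable def pt (a : Fin 3 → ℤ) : Submodule ℝ (Fin 3 → ℝ) :=
  Submodule.span ℝ {rvec a}

/-- The projective line with integer coefficients `b`. -/
noncomputable def ln (b : Fin 3 → ℤ) : Submodule ℝ (Fin 3 → ℝ) :=
  LinearMap.ker (phi b)

lemma phi_rvec (b a : Fin 3 → ℤ) : phi b (rvec a) = ((dotZ b a : ℤ) : ℝ) := by
  simp [phi, rvec, dotZ]

lemma mem_ln_iff (a b : Fin 3 → ℤ) : rvec a ∈ ln b ↔ dotZ b a = 0 := by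
  rw [ln, LinearMap.mem_ker, phi_rvec, Int.cast_eq_zero]

lemma pt_le_ln (a b : Fin 3 → ℤ) : pt a ≤ ln b ↔ dotZ b a = 0 := by
  rw [pt, Submodule.span_singleton_le_iff_mem, mem_ln_iff]

lemma rvec_ne_zero {a : Fin 3 → ℤ} (ha : a ≠ 0) : rvec a ≠ 0 := by
  intro h
  apply ha
  funext k
  have := congrFun h k
  simpa [rvec] using this

lemma isProjPoint_pt {a : Fin 3 → ℤ} (ha : a ≠ 0) : IsProjPoint (pt a) :=
  finrank_span_singleton (rvec_ne_zero ha)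

lemma isProjLine_ln {b : Fin 3 → ℤ} (hb : dotZ b b ≠ 0) : IsProjLine (ln b) := by
  have hsurj : Function.Surjective (phi b) := by
    intro y
    refine ⟨(y / ((dotZ b b : ℤ) : ℝ)) • rvec b, ?_⟩
    have hd : ((dotZ b b : ℤ) : ℝ) ≠ 0 := by exact_mod_cast hb
    rw [map_smul, phi_rvec, smul_eq_mul]
    field_simp
  have h1 : Module.finrank ℝ (LinearMap.range (phi b)) = 1 := by
    rw [LinearMap.range_eq_top_of_surjective _ hsurj, finrank_top, Module.finrank_self]
  have h2 := LinearMap.finrank_range_add_finrank_ker (phi b)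
  rw [h1, Module.finrank_fin_fun] at h2
  unfold IsProjLine ln
  omega

/-- The point set. -/
noncomputable def Pcfg : Finset (Submodule ℝ (Fin 3 → ℝ)) :=
  Finset.univ.image fun i => pt (vdat i)

/-- The line set. -/
noncomputable def Lcfg : Finset (Submodule ℝ (Fin 3 → ℝ)) :=
  Finset.univ.image fun j => ln (wdat j)

lemma pt_inj : Function.Injective fun i : Fin 19 => pt (vdat i) := by
  have key : ∀ i i' : Fin 19, i ≠ i' →
      ∃ j : Fin 18, dotZ (wdat j) (vdat i) = 0 ∧ ¬ dotZ (wdat j) (vdat i') = 0 := by decide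
  intro i i' h
  have h' : pt (vdat i) = pt (vdat i') := h
  by_contra hne
  obtain ⟨j, h0, h1⟩ := key i i' hne
  apply h1
  rw [← pt_le_ln, ← h', pt_le_ln]
  exact h0

lemma ln_inj : Function.Injective fun j : Fin 18 => ln (wdat j) := by
  have key : ∀ j j' : Fin 18, j ≠ j' →
      ∃ i : Fin 19, dotZ (wdat j) (vdat i) = 0 ∧ ¬ dotZ (wdat j') (vdat i) = 0 := by decide
  intro j j' h
  have h' : ln (wdat j) = ln (wdat j') := h
  by_contra hne
  obtain ⟨i, h0, h1⟩ := key j j' hne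
  apply h1
  rw [← mem_ln_iff, ← h', mem_ln_iff]
  exact h0

lemma pointDeg_eq (i : Fin 19) :
    pointDeg Lcfg (pt (vdat i)) =
      (Finset.univ.filter fun j : Fin 18 => dotZ (wdat j) (vdat i) = 0).card := by
  rw [pointDeg, Lcfg, Finset.filter_image, Finset.card_image_of_injective _ ln_inj]
  congr 1
  apply Finset.filter_congr
  intro j _
  rw [pt_le_ln]

lemma lineDeg_eq (j : Fin 18) :
    lineDeg Pcfg (ln (wdat j)) =
      (Finset.univ.filter fun i : Fin 19 => dotZ (wdat j) (vdat i) = 0).card := by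
  rw [lineDeg, Pcfg, Finset.filter_image, Finset.card_image_of_injective _ pt_inj]
  congr 1
  apply Finset.filter_congr
  intro i _
  rw [pt_le_ln]

theorem stmt19 :
    ∃ P L : Finset (Submodule ℝ (Fin 3 → ℝ)),
      (∀ p ∈ P, IsProjPoint p) ∧ (∀ l ∈ L, IsProjLine l) ∧
      P.card = 19 ∧ L.card = 18 ∧
      (P.filter fun p => pointDeg L p = 3).card = 4 ∧
      (P.filter fun p => pointDeg L p = 4).card = 15 ∧
      (∀ p ∈ P, pointDeg L p = 3 ∨ pointDeg L p = 4) ∧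
      (∀ l ∈ L, lineDeg P l = 4) := by
  refine ⟨Pcfg, Lcfg, ?_, ?_, ?_, ?_, ?_, ?_, ?_, ?_⟩
  · intro p hp
    obtain ⟨i, _, rfl⟩ := Finset.mem_image.mp hp
    have hv : ∀ k : Fin 19, vdat k ≠ 0 := by decide
    exact isProjPoint_pt (hv i)
  · intro l hl
    obtain ⟨j, _, rfl⟩ := Finset.mem_image.mp hl
    have hw : ∀ k : Fin 18, dotZ (wdat k) (wdat k) ≠ 0 := by decide
    exact isProjLine_ln (hw j)
  · rw [Pcfg, Finset.card_image_of_injective _ pt_inj]; simp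
  · rw [Lcfg, Finset.card_image_of_injective _ ln_inj]; simp
  · rw [Pcfg, Finset.filter_image, Finset.card_image_of_injective _ pt_inj]
    rw [Finset.filter_congr (fun i _ => by rw [pointDeg_eq i])]
    decide
  · rw [Pcfg, Finset.filter_image, Finset.card_image_of_injective _ pt_inj]
    rw [Finset.filter_congr (fun i _ => by rw [pointDeg_eq i])]
    decide
  · intro p hp
    obtain ⟨i, _, rfl⟩ := Finset.mem_image.mp hp
    rw [pointDeg_eq]
    have key : ∀ k : Fin 19,
        (Finset.univ.filter fun j : Fin 18 => dotZ (wdat j) (vdat k) = 0).card = 3 ∨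
        (Finset.univ.filter fun j : Fin 18 => dotZ (wdat j) (vdat k) = 0).card = 4 := by decide
    exact key i
  · intro l hl
    obtain ⟨j, _, rfl⟩ := Finset.mem_image.mp hl
    rw [lineDeg_eq]
    have key : ∀ k : Fin 18,
        (Finset.univ.filter fun i : Fin 19 => dotZ (wdat k) (vdat i) = 0).card = 4 := by decide
    exact key j
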